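/- arXiv:2106.10903 — 2 statements merged into one kernel-verified Lean document; each statement's English description precedes it below -/
import Mathlib

section
/- Let q = 2^m with m ≥ 5 odd. Any two distinct 6-subsets B_1, B_2 of U_{q+1} with σ_{6,3}(B_1) = σ_{6,3}(B_2) = 0 satisfy |B_1 ∩ B_2| ≤ 4. -/
/-!
Suppose `S = B₁ ∩ B₂` has five elements, so `Bᵢ = insert bᵢ S` with `b₁ ≠ b₂`. Since
`σ₃(insert b S) = σ₃(S) + b σ₂(S)`, both `σ₂(S)` and `σ₃(S)` vanish, and the five points of `S` are
roots of `X⁵ - σ₁X⁴ + σ₄X - σ₅`. Fix one of them, `x₀`. In characteristic 2 the substitution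
`z = (x - x₀)⁻¹` turns the other roots on `U_{q+1}` into solutions of `D z⁴ + c z + 1 = 0` which also
satisfy `z^q = x₀² z + x₀`. A difference `w` of two solutions then has `D w³ = c` and `w^q = x₀² w`,
so the ratio of two differences is a cube root of unity fixed by `x ↦ x^q`; as `3 ∤ q - 1` for odd
`m`, it is `1`. Hence there are at most two such `z`, so at most three roots on `U_{q+1}`.
-/

open Finset

attribute [local instance] Classical.propDecidable

/-- The `l`-th elementary symmetric polynomial evaluated on a finite set `B`. -/
noncomputable def esym {F : Type*} [CommRing F] (B : Finset F) (l : ℕ) : F :=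
  ∑ s ∈ B.powersetCard l, ∏ x ∈ s, x

/-- The set of `n`-th roots of unity. -/
def rootsSet (F : Type*) [Monoid F] (n : ℕ) : Set F := {u | u ^ n = 1}

section Esym

variable {F : Type*} [CommRing F]

theorem esym_eq_esymm (B : Finset F) (l : ℕ) : esym B l = B.val.esymm l := by
  simpa [esym] using (Finset.esymm_map_val id B l).symm

theorem esym_zero (B : Finset F) : esym B 0 = 1 := by
  simp [esym]

theorem esym_insert {a : F} {s : Finset F} (ha : a ∉ s) (l : ℕ) :
    esym (insert a s) (l + 1) = esym s (l + 1) + a * esym s l := by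
  simp only [esym_eq_esymm, insert_val_of_notMem ha, Multiset.esymm,
    Multiset.powersetCard_cons, Multiset.map_add, Multiset.sum_add, Multiset.map_map,
    Function.comp_def, Multiset.prod_cons, Multiset.sum_map_mul_left]

theorem sum_range_esym_mul_pow_eq_zero {S : Finset F} {x : F} (hx : x ∈ S) :
    ∑ j ∈ range (#S + 1), (-1) ^ j * (esym S j * x ^ (#S - j)) = 0 := by
  have h := congrArg (Polynomial.eval x) (Multiset.prod_X_sub_X_eq_sum_esymm S.val)
  simp only [Polynomial.eval_multiset_prod, Polynomial.eval_finsetSum, Multiset.map_map,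
    Function.comp_def, Polynomial.eval_mul, Polynomial.eval_pow, Polynomial.eval_neg,
    Polynomial.eval_one, Polynomial.eval_C, Polynomial.eval_X, Polynomial.eval_sub,
    card_val] at h
  simp only [esym_eq_esymm, ← h]
  exact Multiset.prod_eq_zero (Multiset.mem_map.mpr ⟨x, hx, sub_self x⟩)

theorem esym_eq_zero_of_esym_insert_eq_zero [IsDomain F] {S : Finset F} {p r : F} {l : ℕ}
    (hp : p ∉ S) (hr : r ∉ S) (hpr : p ≠ r) (h₁ : esym (insert p S) (l + 1) = 0)
    (h₂ : esym (insert r S) (l + 1) = 0) : esym S l = 0 ∧ esym S (l + 1) = 0 := by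
  rw [esym_insert hp] at h₁
  rw [esym_insert hr] at h₂
  have hl : esym S l = 0 := (mul_eq_zero.mp (show (p - r) * esym S l = 0 by
    linear_combination h₁ - h₂)).resolve_left (sub_ne_zero.mpr hpr)
  exact ⟨hl, by linear_combination h₁ - p * hl⟩

end Esym

theorem Nat.two_pow_mod_three_of_odd {m : ℕ} (hm : Odd m) : 2 ^ m % 3 = 2 := by
  obtain ⟨k, rfl⟩ := hm
  rw [pow_succ, pow_mul, Nat.mul_mod, Nat.pow_mod]
  norm_num

theorem eq_one_of_pow_three_eq_one_of_pow_two_pow_eq_self {M : Type*} [Monoid M] {m : ℕ}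
    {r : M} (hm : Odd m) (h3 : r ^ 3 = 1) (hq : r ^ 2 ^ m = r) : r = 1 := by
  have h2 : r ^ 2 = r := by
    rw [← Nat.two_pow_mod_three_of_odd hm, ← pow_eq_pow_mod _ h3, hq]
  rw [← h3, pow_succ, h2, ← sq, h2]

theorem eq_of_pow_three_eq_of_pow_two_pow_eq_mul {F : Type*} [Field F] {m : ℕ} {c w v : F}
    (hm : Odd m) (hc : c ≠ 0) (hv : v ≠ 0) (hwq : w ^ 2 ^ m = c * w) (hvq : v ^ 2 ^ m = c * v)
    (h3 : w ^ 3 = v ^ 3) : w = v := by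
  refine (div_eq_one_iff_eq hv).mp (eq_one_of_pow_three_eq_one_of_pow_two_pow_eq_self hm ?_ ?_)
  · rw [div_pow, h3, div_self (pow_ne_zero 3 hv)]
  · rw [div_pow, hwq, hvq, mul_div_mul_left _ _ hc]

section CharTwo

variable {F : Type*} [Field F] [CharP F 2]

theorem inv_sub_quartic_eq_zero {a A e x₀ x : F} (hx₀ : x₀ ^ 5 - a * x₀ ^ 4 + A * x₀ - e = 0)
    (hx : x ^ 5 - a * x ^ 4 + A * x - e = 0) (hne : x ≠ x₀) :
    (x₀ ^ 4 + A) * (x - x₀)⁻¹ ^ 4 + (x₀ - a) * (x - x₀)⁻¹ + 1 = 0 := by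
  have hy : x - x₀ ≠ 0 := sub_ne_zero.mpr hne
  have h4 : x ^ 4 = x₀ ^ 4 + (x - x₀) ^ 4 := by
    simpa using add_pow_char_pow (p := 2) (n := 2) x₀ (x - x₀)
  have h : (x - x₀) * (x₀ ^ 4 + A + (x₀ - a) * (x - x₀) ^ 3 + (x - x₀) ^ 4) = 0 := by
    linear_combination hx - hx₀ - (x - a) * h4
  field_simp
  linear_combination (mul_eq_zero.mp h).resolve_left hy

theorem inv_sub_pow_two_pow {m : ℕ} {x₀ x : F} (hx₀ : x₀ ^ (2 ^ m + 1) = 1)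
    (hx : x ^ (2 ^ m + 1) = 1) (hne : x ≠ x₀) :
    (x - x₀)⁻¹ ^ 2 ^ m = -x₀ ^ 2 * (x - x₀)⁻¹ - x₀ := by
  rw [pow_succ] at hx₀ hx
  have hx₀0 : x₀ ≠ 0 := right_ne_zero_of_mul_eq_one hx₀
  have hx0 : x ≠ 0 := right_ne_zero_of_mul_eq_one hx
  have hy : x - x₀ ≠ 0 := sub_ne_zero.mpr hne
  rw [inv_pow, sub_pow_char_pow, eq_inv_of_mul_eq_one_left hx₀, eq_inv_of_mul_eq_one_left hx]
  field_simp
  ring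

theorem card_le_two_of_quartic_of_pow_two_pow {m : ℕ} {D c l μ : F} (hm : Odd m) (hl : l ≠ 0)
    {T : Finset F} (hT : ∀ z ∈ T, D * z ^ 4 + c * z + 1 = 0 ∧ z ^ 2 ^ m = l * z + μ) :
    #T ≤ 2 := by
  by_contra! h
  obtain ⟨z₁, z₂, z₃, h₁, h₂, h₃, h₁₂, h₁₃, h₂₃⟩ := two_lt_card_iff.mp h
  have hdiff : ∀ z ∈ T, D * (z₁ - z) ^ 4 + c * (z₁ - z) = 0 ∧
      (z₁ - z) ^ 2 ^ m = l * (z₁ - z) := by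
    intro z hz
    obtain ⟨hq, hf⟩ := hT z hz
    obtain ⟨hq₁, hf₁⟩ := hT z₁ h₁
    constructor
    · rw [show 4 = 2 ^ 2 from rfl, sub_pow_char_pow]
      linear_combination hq₁ - hq
    · rw [sub_pow_char_pow, hf₁, hf]
      ring
  have hD : D ≠ 0 := by
    rintro rfl
    have hc : c = 0 := by simpa [sub_ne_zero.mpr h₁₂] using (hdiff z₂ h₂).1
    simpa [hc] using (hT z₁ h₁).1
  have hcube : ∀ z ∈ T, z₁ ≠ z → (z₁ - z) ^ 3 = -c / D := by
    intro z hz hne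
    rw [eq_div_iff hD]
    refine mul_left_cancel₀ (sub_ne_zero.mpr hne) ?_
    linear_combination (hdiff z hz).1
  refine h₂₃ (sub_right_injective (eq_of_pow_three_eq_of_pow_two_pow_eq_mul hm hl
    (sub_ne_zero.mpr h₁₃) (hdiff z₂ h₂).2 (hdiff z₃ h₃).2 ?_))
  rw [hcube z₂ h₂ h₁₂, hcube z₃ h₃ h₁₃]

theorem card_le_three_of_quintic_eq_zero {m : ℕ} (hm : Odd m) {a A e : F} {S : Finset F}
    (hU : ↑S ⊆ rootsSet F (2 ^ m + 1)) (hroot : ∀ x ∈ S, x ^ 5 - a * x ^ 4 + A * x - e = 0) :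
    #S ≤ 3 := by
  obtain rfl | ⟨x₀, hx₀⟩ := S.eq_empty_or_nonempty
  · simp
  have hx₀U : x₀ ^ (2 ^ m + 1) = 1 := hU hx₀
  have hl : -x₀ ^ 2 ≠ 0 := by
    rw [pow_succ] at hx₀U
    exact neg_ne_zero.mpr (pow_ne_zero 2 (right_ne_zero_of_mul_eq_one hx₀U))
  have hinj : Set.InjOn (fun x ↦ (x - x₀)⁻¹) (S.erase x₀) :=
    fun x _ y _ h ↦ sub_left_injective (inv_injective h)
  have hT := card_le_two_of_quartic_of_pow_two_pow (D := x₀ ^ 4 + A) (c := x₀ - a) (μ := -x₀)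
    (T := (S.erase x₀).image fun x ↦ (x - x₀)⁻¹) hm hl (by
      simp only [mem_image, mem_erase]
      rintro _ ⟨x, ⟨hne, hx⟩, rfl⟩
      exact ⟨inv_sub_quartic_eq_zero (hroot x₀ hx₀) (hroot x hx) hne,
        (inv_sub_pow_two_pow hx₀U (hU hx) hne).trans (sub_eq_add_neg _ _)⟩)
  rw [card_image_of_injOn hinj, card_erase_of_mem hx₀] at hT
  omega

end CharTwo

theorem stmt11_general (m : ℕ) (hodd : Odd m)
    (B₁ B₂ : Finset (GaloisField 2 (2 * m)))
    (hB₁U : ↑B₁ ⊆ rootsSet (GaloisField 2 (2 * m)) (2 ^ m + 1))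
    (hB₁ : B₁.card = 6) (hB₂ : B₂.card = 6)
    (h₁ : esym B₁ 3 = 0) (h₂ : esym B₂ 3 = 0) (hne : B₁ ≠ B₂) :
    (B₁ ∩ B₂).card ≤ 4 := by
  by_contra! hS
  have hS5 : #(B₁ ∩ B₂) = 5 := by
    have hS6 : #(B₁ ∩ B₂) ≠ 6 := fun h ↦ hne <|
      (eq_of_subset_of_card_le inter_subset_left (by omega)).symm.trans
        (eq_of_subset_of_card_le inter_subset_right (by omega))
    have := hB₁ ▸ card_le_card (inter_subset_left : B₁ ∩ B₂ ⊆ B₁)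
    omega
  obtain ⟨p, hpS, hp⟩ : ∃ p ∉ B₁ ∩ B₂, insert p (B₁ ∩ B₂) = B₁ :=
    exists_eq_insert_iff.mpr ⟨inter_subset_left, by omega⟩
  obtain ⟨r, hrS, hr⟩ : ∃ r ∉ B₁ ∩ B₂, insert r (B₁ ∩ B₂) = B₂ :=
    exists_eq_insert_iff.mpr ⟨inter_subset_right, by omega⟩
  have hpr : p ≠ r := by
    rintro rfl
    exact hne (hp.symm.trans hr)
  obtain ⟨he₂, he₃⟩ := esym_eq_zero_of_esym_insert_eq_zero hpS hrS hpr (l := 2)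
    (by rwa [hp]) (by rwa [hr])
  have hroot : ∀ x ∈ B₁ ∩ B₂, x ^ 5 - esym (B₁ ∩ B₂) 1 * x ^ 4 + esym (B₁ ∩ B₂) 4 * x
      - esym (B₁ ∩ B₂) 5 = 0 := by
    intro x hx
    have h := sum_range_esym_mul_pow_eq_zero hx
    simp only [hS5, sum_range_succ, sum_range_zero, esym_zero, he₂, he₃] at h
    linear_combination h
  have := card_le_three_of_quintic_eq_zero hodd (fun x hx ↦ hB₁U (inter_subset_left hx)) hroot
  omega

theorem stmt11 (m : ℕ) (hm : 5 ≤ m) (hodd : Odd m)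
    (B₁ B₂ : Finset (GaloisField 2 (2 * m)))
    (hB₁U : ↑B₁ ⊆ rootsSet (GaloisField 2 (2 * m)) (2 ^ m + 1))
    (hB₂U : ↑B₂ ⊆ rootsSet (GaloisField 2 (2 * m)) (2 ^ m + 1))
    (hB₁ : B₁.card = 6) (hB₂ : B₂.card = 6)
    (h₁ : esym B₁ 3 = 0) (h₂ : esym B₂ 3 = 0) (hne : B₁ ≠ B₂) :
    (B₁ ∩ B₂).card ≤ 4 :=
  stmt11_general m hodd B₁ B₂ hB₁U hB₁ hB₂ h₁ h₂ hne
end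

section
/- Let q = 2^m with m ≥ 5 odd. Define B^b_{σ_{5,3},q+1} as the set of 5-subsets B of U_{q+1} such that σ_{5,3}(B − a) = 0 for some a ∈ B. Then (U_{q+1}, B^b_{σ_{5,3},q+1}) is a 4-(q+1, 5, 5) design. -/
open Finset

attribute [local instance] Classical.propDecidable

/-!
Let `s₁, …, s₄` be the elementary symmetric functions of the 4-set `E ⊆ U`. In characteristic 2,
`σ₃((E ∪ {x}) - t) = s₃ + (x + t) s₂ + x t s₁` (`blockForm E x t`), so the blocks through `E` are
the sets `E ∪ {x}` on which this vanishes for `t = x` or for some `t ∈ E`. The first case means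
`x² = s₃ / s₁`, the second `x = (s₃ + t s₂) / (s₂ + t s₁)` (`blockPoint E t`), a Möbius function of
`t`: five candidate points.

The Frobenius `σ : u ↦ u ^ q` inverts the elements of `U`, hence exchanges `s_k` with
`s_{4-k} / s₄`; this puts the five points in `U` and shows that the denominators do not vanish.
Since `blockForm E e f ≠ 0` for `e, f ∈ E`, no candidate lies in `E`. The candidates are pairwise
distinct because the Möbius determinant `s₂² + s₁ s₃` is nonzero: otherwise a primitive cube root
of unity would be fixed by `σ`, that is, lie in `GF(q)`, which is impossible for odd `m`.
-/

section Esym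

variable {R : Type*} [CommRing R]

@[simp]
lemma esym_zero_s13 (s : Finset R) : esym s 0 = 1 := by
  simp [esym]

@[simp]
lemma esym_empty_succ (l : ℕ) : esym (∅ : Finset R) (l + 1) = 0 := by
  rw [esym, powersetCard_eq_empty.2 (by simp), sum_empty]

lemma esym_insert_succ {x : R} {s : Finset R} (hx : x ∉ s) (l : ℕ) :
    esym (insert x s) (l + 1) = esym s (l + 1) + x * esym s l := by
  have hxt {t : Finset R} (ht : t ∈ s.powersetCard l) : x ∉ t :=
    fun h => hx ((mem_powersetCard.1 ht).1 h)
  rw [esym, powersetCard_succ_insert hx, sum_union, sum_image, esym, esym, mul_sum]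
  · exact congrArg _ (sum_congr rfl fun t ht => prod_insert (hxt ht))
  · intro t ht u hu htu
    simpa [erase_insert (hxt ht), erase_insert (hxt hu)] using congrArg (erase · x) htu
  · refine disjoint_right.2 fun t ht ht' => ?_
    obtain ⟨u, -, rfl⟩ := mem_image.1 ht
    exact hx ((mem_powersetCard.1 ht').1 (mem_insert_self x u))

@[simp]
lemma esym_singleton_succ (x : R) (l : ℕ) : esym {x} (l + 1) = x * esym ∅ l := by
  simpa using esym_insert_succ (notMem_empty x) l

lemma esym_insert_four {a b c d : R} (hab : a ≠ b) (hac : a ≠ c) (had : a ≠ d) (hbc : b ≠ c)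
    (hbd : b ≠ d) (hcd : c ≠ d) :
    esym {a, b, c, d} 1 = a + b + c + d ∧
      esym {a, b, c, d} 2 = a * b + a * c + a * d + b * c + b * d + c * d ∧
      esym {a, b, c, d} 3 = a * b * c + a * b * d + a * c * d + b * c * d ∧
      esym {a, b, c, d} 4 = a * b * c * d := by
  refine ⟨?_, ?_, ?_, ?_⟩ <;>
    simp only [mem_insert, mem_singleton, or_self, not_false_eq_true, esym_insert_succ,
      Nat.reduceAdd, esym_singleton_succ, esym_empty_succ, mul_zero, add_zero, esym_zero_s13,
      mul_one, zero_add, hab, hac, had, hbc, hbd, hcd] <;>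
    ring

lemma esym_image_sub_three [CharP R 2] {B : Finset R} (hB : #B = 5) (t : R) :
    esym (B.image (· - t)) 3 = esym B 3 + t * esym B 2 := by
  obtain ⟨v, B₄, hv, rfl, hB₄⟩ := card_eq_succ.1 hB
  obtain ⟨w, x, y, z, hwx, hwy, hwz, hxy, hxz, hyz, rfl⟩ := card_eq_four.1 hB₄
  simp only [mem_insert, mem_singleton, not_or] at hv
  simp only [image_insert, image_singleton, mem_insert, sub_left_inj, mem_singleton, or_self,
    not_false_eq_true, esym_insert_succ, Nat.reduceAdd, esym_singleton_succ, esym_empty_succ,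
    mul_zero, add_zero, esym_zero_s13, mul_one, zero_add, hv, hwx, hwy, hwz, hxy, hxz, hyz]
  ring_nf
  reduce_mod_char!

lemma esym_card_ne_zero [NoZeroDivisors R] [Nontrivial R] {s : Finset R} (hs : (0 : R) ∉ s) :
    esym s #s ≠ 0 := by
  rw [esym, powersetCard_self, sum_singleton, prod_ne_zero_iff]
  exact fun x hx h0 => hs (h0 ▸ hx)

end Esym

lemma exists_eq_insert_three_of_mem {α : Type*} {E : Finset α} (hE : #E = 4) {e : α}
    (he : e ∈ E) :
    ∃ f g h, e ≠ f ∧ e ≠ g ∧ e ≠ h ∧ f ≠ g ∧ f ≠ h ∧ g ≠ h ∧ E = {e, f, g, h} := by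
  obtain ⟨f, g, h, hfg, hfh, hgh, hE'⟩ :=
    card_eq_three.1 (by rw [card_erase_of_mem he, hE] : #(E.erase e) = 3)
  have hne : ∀ x ∈ E.erase e, e ≠ x := fun x hx => (ne_of_mem_erase hx).symm
  refine ⟨f, g, h, hne f (by simp [hE']), hne g (by simp [hE']), hne h (by simp [hE']),
    hfg, hfh, hgh, ?_⟩
  rw [← insert_erase he, hE']

lemma exists_eq_insert_two_of_mem {α : Type*} {E : Finset α} (hE : #E = 4) {e f : α}
    (he : e ∈ E) (hf : f ∈ E) (hef : e ≠ f) :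
    ∃ g h, e ≠ g ∧ e ≠ h ∧ f ≠ g ∧ f ≠ h ∧ g ≠ h ∧ E = {e, f, g, h} := by
  have hf' : f ∈ E.erase e := mem_erase.2 ⟨hef.symm, hf⟩
  obtain ⟨g, h, hgh, hE'⟩ :=
    card_eq_two.1 (by rw [card_erase_of_mem hf', card_erase_of_mem he, hE] :
      #((E.erase e).erase f) = 2)
  have hg : g ∈ (E.erase e).erase f := by simp [hE']
  have hh : h ∈ (E.erase e).erase f := by simp [hE']
  refine ⟨g, h, (ne_of_mem_erase (mem_of_mem_erase hg)).symm,
    (ne_of_mem_erase (mem_of_mem_erase hh)).symm, (ne_of_mem_erase hg).symm,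
    (ne_of_mem_erase hh).symm, hgh, ?_⟩
  rw [← insert_erase he, ← insert_erase hf', hE']

lemma ncard_setOf_superset_card_succ {α : Type*} (E : Finset α) (P : Finset α → Prop) :
    {B | E ⊆ B ∧ #B = #E + 1 ∧ P B}.ncard = {x | x ∉ E ∧ P (insert x E)}.ncard := by
  rw [← Set.InjOn.ncard_image (f := (insert · E)) fun x hx y _ hxy => (insert_inj hx.1).1 hxy]
  congr 1
  ext B
  simp only [Set.mem_ofPred_eq, Set.mem_image]
  constructor
  · rintro ⟨hEB, hB, hP⟩
    obtain ⟨x, hx, rfl⟩ := exists_eq_insert_iff.2 ⟨hEB, hB.symm⟩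
    exact ⟨x, ⟨hx, hP⟩, rfl⟩
  · rintro ⟨x, ⟨hx, hP⟩, rfl⟩
    exact ⟨subset_insert x E, card_insert_of_notMem hx, hP⟩

lemma ne_zero_of_mem_rootsSet {M : Type*} [MonoidWithZero M] [Nontrivial M] {n : ℕ} {u : M}
    (hu : u ∈ rootsSet M (n + 1)) : u ≠ 0 := by
  rintro rfl
  exact zero_ne_one ((zero_pow n.succ_ne_zero).symm.trans hu)

lemma mem_rootsSet_of_sq_mem {R : Type*} [CommRing R] [IsReduced R] [CharP R 2] {n : ℕ} {x : R}
    (hx : x ^ 2 ∈ rootsSet R n) : x ∈ rootsSet R n :=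
  frobenius_inj R 2 <| by
    rw [frobenius_def, frobenius_def, one_pow, ← pow_mul, mul_comm, pow_mul]
    exact hx

lemma esym_four_ne_zero {F : Type*} [Field F] {n : ℕ} {E : Finset F} (hE : #E = 4)
    (hEU : ↑E ⊆ rootsSet F (n + 1)) : esym E 4 ≠ 0 :=
  hE ▸ esym_card_ne_zero fun h0 => ne_zero_of_mem_rootsSet (hEU h0) rfl

section Frobenius

variable {F : Type*} [Field F] [CharP F 2] {m : ℕ}

local notation "σ" => iterateFrobenius F 2 m

lemma mem_rootsSet_iff_iterateFrobenius_mul_self {u : F} :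
    u ∈ rootsSet F (2 ^ m + 1) ↔ σ u * u = 1 := by
  rw [rootsSet, Set.mem_ofPred_eq, iterateFrobenius_def, pow_succ]

lemma iterateFrobenius_eq_inv {u : F} (hu : u ∈ rootsSet F (2 ^ m + 1)) : σ u = u⁻¹ :=
  eq_inv_of_mul_eq_one_left (mem_rootsSet_iff_iterateFrobenius_mul_self.1 hu)

lemma div_mem_rootsSet {N D w : F} (hD : D ≠ 0) (hw : w ≠ 0) (hN : σ N * w = D)
    (hD' : σ D * w = N) : N / D ∈ rootsSet F (2 ^ m + 1) := by
  have hN0 : N ≠ 0 := by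
    rintro rfl
    exact hD (by simpa using hN.symm)
  rw [mem_rootsSet_iff_iterateFrobenius_mul_self, map_div₀, eq_div_of_mul_eq hw hN,
    eq_div_of_mul_eq hw hD']
  field_simp

lemma iterateFrobenius_ne_self_of_sq_add_self_add_one_eq_zero (hm : Odd m) {z : F}
    (hz : z ^ 2 + z + 1 = 0) : σ z ≠ z := by
  have hz3 : z ^ 3 = 1 := by linear_combination (z - 1) * hz
  have hmod : 2 ^ m % 3 = 2 := by
    obtain ⟨j, rfl⟩ := hm
    rw [pow_succ, pow_mul, Nat.mul_mod, Nat.pow_mod]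
    norm_num
  intro hσ
  have hsq : z ^ 2 = z := by
    rw [iterateFrobenius_def, ← Nat.div_add_mod (2 ^ m) 3, hmod, pow_add, pow_mul, hz3,
      one_pow, one_mul] at hσ
    exact hσ
  exact one_ne_zero (by linear_combination (norm := (ring_nf; reduce_mod_char!)) hz - hsq :
    (1 : F) = 0)

end Frobenius

noncomputable def blockForm {R : Type*} [CommRing R] (E : Finset R) (x t : R) : R :=
  esym E 3 + (x + t) * esym E 2 + x * t * esym E 1

noncomputable def blockPoint {F : Type*} [Field F] (E : Finset F) (t : F) : F :=
  (esym E 3 + t * esym E 2) / (esym E 2 + t * esym E 1)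

section Blocks

variable {F : Type*} [Field F] [CharP F 2] {E : Finset F}

lemma esym_insert_image_sub_three (hE : #E = 4) {x : F} (hx : x ∉ E) (t : F) :
    esym ((insert x E).image (· - t)) 3 = blockForm E x t := by
  rw [esym_image_sub_three (by rw [card_insert_of_notMem hx, hE]), esym_insert_succ hx,
    esym_insert_succ hx, blockForm]
  ring

lemma blockForm_self (x : F) : blockForm E x x = esym E 3 + x ^ 2 * esym E 1 := by
  rw [blockForm]
  ring_nf
  reduce_mod_char!

lemma blockForm_ne_zero (hE : #E = 4) {e f : F} (he : e ∈ E) (hf : f ∈ E) :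
    blockForm E e f ≠ 0 := by
  rcases eq_or_ne e f with rfl | hef
  · obtain ⟨f, g, h, hef, heg, heh, hfg, hfh, hgh, rfl⟩ := exists_eq_insert_three_of_mem hE he
    obtain ⟨e1, -, e3, -⟩ := esym_insert_four hef heg heh hfg hfh hgh
    have : blockForm {e, f, g, h} e e = (e + f) * (e + g) * (e + h) := by
      rw [blockForm_self, e1, e3]
      ring
    simp [this, CharTwo.add_eq_zero, hef, heg, heh]
  · obtain ⟨g, h, heg, heh, hfg, hfh, hgh, rfl⟩ := exists_eq_insert_two_of_mem hE he hf hef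
    obtain ⟨e1, e2, e3, -⟩ := esym_insert_four hef heg heh hfg hfh hgh
    have : blockForm {e, f, g, h} e f = (e + f) ^ 2 * (g + h) := by
      rw [blockForm, e1, e2, e3]
      ring_nf
      reduce_mod_char!
    simp [this, CharTwo.add_eq_zero, hef, hgh]

lemma blockForm_eq_zero_iff {x t : F} (hD : esym E 2 + t * esym E 1 ≠ 0) :
    blockForm E x t = 0 ↔ x = blockPoint E t := by
  have : blockForm E x t = x * (esym E 2 + t * esym E 1) + (esym E 3 + t * esym E 2) := by
    rw [blockForm]
    ring
  rw [this, CharTwo.add_eq_zero, blockPoint, eq_div_iff hD]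

end Blocks

section Conjugation

variable {F : Type*} [Field F] [CharP F 2] {m : ℕ} {E : Finset F}

local notation "σ" => iterateFrobenius F 2 m

lemma iterateFrobenius_esym_mul_esym_four (hE : #E = 4) (hEU : ↑E ⊆ rootsSet F (2 ^ m + 1))
    {k : ℕ} (hk : k ≤ 4) : σ (esym E k) * esym E 4 = esym E (4 - k) := by
  obtain ⟨a, b, c, d, hab, hac, had, hbc, hbd, hcd, rfl⟩ := card_eq_four.1 hE
  simp only [coe_insert, coe_singleton, Set.insert_subset_iff, Set.singleton_subset_iff] at hEU
  obtain ⟨ha, hb, hc, hd⟩ := hEU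
  have := ne_zero_of_mem_rootsSet ha
  have := ne_zero_of_mem_rootsSet hb
  have := ne_zero_of_mem_rootsSet hc
  have := ne_zero_of_mem_rootsSet hd
  obtain ⟨h1, h2, h3, h4⟩ := esym_insert_four hab hac had hbc hbd hcd
  interval_cases k <;>
    simp only [Nat.sub_self, esym_zero_s13, h1, h2, h3, h4, map_add, map_mul, map_one,
      iterateFrobenius_eq_inv ha, iterateFrobenius_eq_inv hb, iterateFrobenius_eq_inv hc,
      iterateFrobenius_eq_inv hd] <;>
    field_simp <;> ring

lemma esym_one_ne_zero (hE : #E = 4) (hEU : ↑E ⊆ rootsSet F (2 ^ m + 1)) : esym E 1 ≠ 0 := by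
  intro h1
  have h3 : esym E 3 = 0 := by
    simpa [h1] using (iterateFrobenius_esym_mul_esym_four hE hEU (k := 1) (by norm_num)).symm
  obtain ⟨a, b, c, d, hab, hac, had, hbc, hbd, hcd, rfl⟩ := card_eq_four.1 hE
  obtain ⟨e1, -, e3, -⟩ := esym_insert_four hab hac had hbc hbd hcd
  rw [e1] at h1
  rw [e3] at h3
  have : (a + b) * (a + c) * (b + c) = 0 := by
    linear_combination (norm := (ring_nf; reduce_mod_char!)) h3 - (a * b + a * c + b * c) * h1
  simp [CharTwo.add_eq_zero, hab, hac, hbc] at this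

lemma iterateFrobenius_esym_two_add_mul (hE : #E = 4) (hEU : ↑E ⊆ rootsSet F (2 ^ m + 1))
    {e : F} (he : e ∈ E) :
    σ (esym E 2 + e * esym E 1) * (e * esym E 4) = esym E 3 + e * esym E 2 := by
  have := ne_zero_of_mem_rootsSet (hEU he)
  have h1 := iterateFrobenius_esym_mul_esym_four hE hEU (k := 1) (by norm_num)
  have h2 := iterateFrobenius_esym_mul_esym_four hE hEU (k := 2) (by norm_num)
  rw [map_add, map_mul, iterateFrobenius_eq_inv (hEU he)]
  field_simp
  linear_combination e * h2 + h1

lemma iterateFrobenius_esym_three_add_mul (hE : #E = 4) (hEU : ↑E ⊆ rootsSet F (2 ^ m + 1))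
    {e : F} (he : e ∈ E) :
    σ (esym E 3 + e * esym E 2) * (e * esym E 4) = esym E 2 + e * esym E 1 := by
  have := ne_zero_of_mem_rootsSet (hEU he)
  have h2 := iterateFrobenius_esym_mul_esym_four hE hEU (k := 2) (by norm_num)
  have h3 := iterateFrobenius_esym_mul_esym_four hE hEU (k := 3) (by norm_num)
  rw [map_add, map_mul, iterateFrobenius_eq_inv (hEU he)]
  field_simp
  linear_combination e * h3 + h2

lemma esym_two_add_mul_esym_one_ne_zero (hE : #E = 4) (hEU : ↑E ⊆ rootsSet F (2 ^ m + 1))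
    {e : F} (he : e ∈ E) : esym E 2 + e * esym E 1 ≠ 0 := by
  intro hD
  have hN : esym E 3 + e * esym E 2 = 0 := by
    rw [← iterateFrobenius_esym_two_add_mul hE hEU he, hD, map_zero, zero_mul]
  exact blockForm_ne_zero hE he he (by rw [blockForm]; linear_combination hN + e * hD)

lemma blockPoint_mem_rootsSet (hE : #E = 4) (hEU : ↑E ⊆ rootsSet F (2 ^ m + 1)) {e : F}
    (he : e ∈ E) : blockPoint E e ∈ rootsSet F (2 ^ m + 1) :=
  div_mem_rootsSet (esym_two_add_mul_esym_one_ne_zero hE hEU he)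
    (mul_ne_zero (ne_zero_of_mem_rootsSet (hEU he)) (esym_four_ne_zero hE hEU))
    (iterateFrobenius_esym_three_add_mul hE hEU he) (iterateFrobenius_esym_two_add_mul hE hEU he)

lemma esym_three_div_esym_one_mem_rootsSet (hE : #E = 4)
    (hEU : ↑E ⊆ rootsSet F (2 ^ m + 1)) : esym E 3 / esym E 1 ∈ rootsSet F (2 ^ m + 1) :=
  div_mem_rootsSet (esym_one_ne_zero hE hEU) (esym_four_ne_zero hE hEU)
    (iterateFrobenius_esym_mul_esym_four hE hEU (k := 3) (by norm_num))
    (iterateFrobenius_esym_mul_esym_four hE hEU (k := 1) (by norm_num))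

lemma sq_esym_two_add_esym_one_mul_esym_three_ne_zero (hm : Odd m) (hE : #E = 4)
    (hEU : ↑E ⊆ rootsSet F (2 ^ m + 1)) : esym E 2 ^ 2 + esym E 1 * esym E 3 ≠ 0 := by
  obtain ⟨a, b, c, d, hab, hac, had, hbc, hbd, hcd, rfl⟩ := card_eq_four.1 hE
  simp only [coe_insert, coe_singleton, Set.insert_subset_iff, Set.singleton_subset_iff] at hEU
  obtain ⟨ha, hb, hc, hd⟩ := hEU
  have := ne_zero_of_mem_rootsSet ha
  have := ne_zero_of_mem_rootsSet hb
  have := ne_zero_of_mem_rootsSet hc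
  have := ne_zero_of_mem_rootsSet hd
  obtain ⟨e1, e2, e3, -⟩ := esym_insert_four hab hac had hbc hbd hcd
  have hA : (a + c) * (b + d) ≠ 0 := by simp [CharTwo.add_eq_zero, hac, hbd]
  have hB : (a + b) * (c + d) ≠ 0 := by simp [CharTwo.add_eq_zero, hab, hcd]
  have hσ : σ ((a + c) * (b + d) / ((a + b) * (c + d))) =
      (a + c) * (b + d) / ((a + b) * (c + d)) := by
    simp only [map_div₀, map_mul, map_add, iterateFrobenius_eq_inv ha,
      iterateFrobenius_eq_inv hb, iterateFrobenius_eq_inv hc, iterateFrobenius_eq_inv hd]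
    field_simp
    ring
  intro h
  replace h : ((a + c) * (b + d)) ^ 2 + (a + c) * (b + d) * ((a + b) * (c + d)) +
      ((a + b) * (c + d)) ^ 2 = 0 := by
    rw [e1, e2, e3] at h
    linear_combination (norm := (ring_nf; reduce_mod_char!)) h
  generalize (a + c) * (b + d) = A at hA hσ h
  generalize (a + b) * (c + d) = B at hB hσ h
  refine iterateFrobenius_ne_self_of_sq_add_self_add_one_eq_zero hm ?_ hσ
  field_simp
  linear_combination h

lemma blockPoint_injOn (hm : Odd m) (hE : #E = 4) (hEU : ↑E ⊆ rootsSet F (2 ^ m + 1)) :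
    Set.InjOn (blockPoint E) E := by
  intro e he f hf hef
  rw [blockPoint, blockPoint, div_eq_div_iff (esym_two_add_mul_esym_one_ne_zero hE hEU he)
    (esym_two_add_mul_esym_one_ne_zero hE hEU hf)] at hef
  have : (e + f) * (esym E 2 ^ 2 + esym E 1 * esym E 3) = 0 := by
    linear_combination (norm := (ring_nf; reduce_mod_char!)) hef
  exact CharTwo.add_eq_zero.1 ((mul_eq_zero.1 this).resolve_right
    (sq_esym_two_add_esym_one_mul_esym_three_ne_zero hm hE hEU))

lemma blockForm_blockPoint_self_ne_zero (hm : Odd m) (hE : #E = 4)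
    (hEU : ↑E ⊆ rootsSet F (2 ^ m + 1)) {e : F} (he : e ∈ E) :
    blockForm E (blockPoint E e) (blockPoint E e) ≠ 0 := by
  have hD := esym_two_add_mul_esym_one_ne_zero hE hEU he
  have key : blockForm E (blockPoint E e) (blockPoint E e) * (esym E 2 + e * esym E 1) ^ 2 =
      (esym E 2 ^ 2 + esym E 1 * esym E 3) * blockForm E e e := by
    rw [blockForm_self, blockForm_self, blockPoint]
    field_simp
    ring_nf
    reduce_mod_char!
  intro h
  rw [h, zero_mul, eq_comm] at key
  exact mul_ne_zero (sq_esym_two_add_esym_one_mul_esym_three_ne_zero hm hE hEU)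
    (blockForm_ne_zero hE he he) key

lemma setOf_blockForm_eq_zero (hE : #E = 4) (hEU : ↑E ⊆ rootsSet F (2 ^ m + 1)) {x₀ : F}
    (hx₀ : x₀ ^ 2 * esym E 1 = esym E 3) :
    {x | x ∉ E ∧ x ∈ rootsSet F (2 ^ m + 1) ∧ ∃ t ∈ insert x E, blockForm E x t = 0} =
      ↑(insert x₀ (E.image (blockPoint E))) := by
  have hs1 := esym_one_ne_zero hE hEU
  have hx₀x₀ : blockForm E x₀ x₀ = 0 := by
    rw [blockForm_self, hx₀, CharTwo.add_self_eq_zero]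
  ext x
  simp only [Set.mem_ofPred_eq, coe_insert, coe_image, Set.mem_insert_iff, Set.mem_image,
    mem_coe, exists_mem_insert]
  constructor
  · rintro ⟨-, -, hxx | ⟨t, ht, hxt⟩⟩
    · left
      refine frobenius_inj F 2 (mul_right_cancel₀ hs1 ?_)
      rw [frobenius_def, frobenius_def, hx₀, ← CharTwo.add_eq_zero, add_comm, ← blockForm_self,
        hxx]
    · right
      exact ⟨t, ht, ((blockForm_eq_zero_iff (esym_two_add_mul_esym_one_ne_zero hE hEU ht)).1
        hxt).symm⟩
  · rintro (rfl | ⟨e, he, rfl⟩)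
    · refine ⟨fun hx => blockForm_ne_zero hE hx hx hx₀x₀, ?_, Or.inl hx₀x₀⟩
      refine mem_rootsSet_of_sq_mem ?_
      rw [eq_div_of_mul_eq hs1 hx₀]
      exact esym_three_div_esym_one_mem_rootsSet hE hEU
    · have hD := esym_two_add_mul_esym_one_ne_zero hE hEU he
      refine ⟨fun hf => blockForm_ne_zero hE hf he ((blockForm_eq_zero_iff hD).2 rfl),
        blockPoint_mem_rootsSet hE hEU he, Or.inr ⟨e, he, (blockForm_eq_zero_iff hD).2 rfl⟩⟩

lemma card_insert_image_blockPoint (hm : Odd m) (hE : #E = 4)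
    (hEU : ↑E ⊆ rootsSet F (2 ^ m + 1)) {x₀ : F} (hx₀ : x₀ ^ 2 * esym E 1 = esym E 3) :
    #(insert x₀ (E.image (blockPoint E))) = 5 := by
  rw [card_insert_of_notMem, card_image_of_injOn (blockPoint_injOn hm hE hEU), hE]
  intro hx₀E
  obtain ⟨e, he, rfl⟩ := mem_image.1 hx₀E
  exact blockForm_blockPoint_self_ne_zero hm hE hEU he
    (by rw [blockForm_self, hx₀, CharTwo.add_self_eq_zero])

end Conjugation

theorem stmt13_general (m : ℕ) (hodd : Odd m)
    (E : Finset (GaloisField 2 (2 * m)))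
    (hEU : ↑E ⊆ rootsSet (GaloisField 2 (2 * m)) (2 ^ m + 1))
    (hE : E.card = 4) :
    {B : Finset (GaloisField 2 (2 * m)) |
        ↑B ⊆ rootsSet (GaloisField 2 (2 * m)) (2 ^ m + 1) ∧ B.card = 5 ∧
          (∃ a ∈ B, esym (B.image (fun b => b - a)) 3 = 0) ∧ E ⊆ B}.ncard = 5 := by
  obtain ⟨x₀, hx₀⟩ := surjective_frobenius (GaloisField 2 (2 * m)) 2 (esym E 3 / esym E 1)
  rw [frobenius_def, eq_div_iff (esym_one_ne_zero hE hEU)] at hx₀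
  calc _ = {B | E ⊆ B ∧ #B = #E + 1 ∧
          (↑B ⊆ rootsSet (GaloisField 2 (2 * m)) (2 ^ m + 1) ∧
            ∃ a ∈ B, esym (B.image (· - a)) 3 = 0)}.ncard := by
        congr 1
        ext B
        simp only [Set.mem_ofPred_eq, hE]
        tauto
    _ = {x | x ∉ E ∧ x ∈ rootsSet (GaloisField 2 (2 * m)) (2 ^ m + 1) ∧
          ∃ t ∈ insert x E, blockForm E x t = 0}.ncard := by
        rw [ncard_setOf_superset_card_succ]
        congr 1
        ext x
        simp only [Set.mem_ofPred_eq, coe_insert, Set.insert_subset_iff, hEU, and_true]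
        exact and_congr_right fun hx => and_congr_right fun _ =>
          exists_congr fun t => and_congr_right fun _ => by rw [esym_insert_image_sub_three hE hx]
    _ = 5 := by
      rw [setOf_blockForm_eq_zero hE hEU hx₀, Set.ncard_coe_finset,
        card_insert_image_blockPoint hodd hE hEU hx₀]

theorem stmt13 (m : ℕ) (hm : 5 ≤ m) (hodd : Odd m)
    (E : Finset (GaloisField 2 (2 * m)))
    (hEU : ↑E ⊆ rootsSet (GaloisField 2 (2 * m)) (2 ^ m + 1))
    (hE : E.card = 4) :
    {B : Finset (GaloisField 2 (2 * m)) |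
        ↑B ⊆ rootsSet (GaloisField 2 (2 * m)) (2 ^ m + 1) ∧ B.card = 5 ∧
          (∃ a ∈ B, esym (B.image (fun b => b - a)) 3 = 0) ∧ E ⊆ B}.ncard = 5 :=
  stmt13_general m hodd E hEU hE
end
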